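/- arXiv:1107.0326 — 2 statements merged into one kernel-verified Lean document; each statement's English description precedes it below -/
import Mathlib

section
/- Every mixed strategy Q of Monte of the form: θ uniform on {1,2,3} with arbitrary conditional revealing probabilities λ_θ ∈ [0,1] (i.e., Q assigns probability λ_θ/3 to (θ, smaller alternative) and (1−λ_θ)/3 to (θ, larger alternative)) is a minimax strategy: against such Q, every pure strategy of Conie wins with probability at most 2/3. -/
open Finset

/-- Doors are `Fin 3` (door 1 = 0, door 2 = 1, door 3 = 2). -/
abbrev Door := Fin 3

/-- Monte's pure strategy: a pair (θ, d) with prize door θ and offered door d ≠ θ. -/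
abbrev MonteStrat := {p : Door × Door // p.2 ≠ p.1}

/-- Conie's pure strategy: (x, a, b); `true` = switch, `false` = hold;
`a` is the reaction to the smaller alternative door, `b` to the larger. -/
abbrev ConieStrat := Door × Bool × Bool

/-- The smaller of the two doors different from `x`. -/
def smallerAlt (x : Door) : Door := if x = 0 then 1 else 0

/-- The larger of the two doors different from `x`. -/
def largerAlt (x : Door) : Door := if x = 2 then 1 else 2

/-- Conie's action when offered door `y` (≠ her pick). -/
def act (A : ConieStrat) (y : Door) : Bool :=
  if y = smallerAlt A.1 then A.2.1 else A.2.2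

/-- Conie wins iff (mismatch and she switches against the offer θ) or
(match and she holds against the offer d). -/
def wins (A : ConieStrat) (M : MonteStrat) : Bool :=
  if A.1 = M.val.1 then !(act A M.val.2) else act A M.val.1

/-- The 12×6 payoff matrix entry. -/
noncomputable def payoff (A : ConieStrat) (M : MonteStrat) : ℝ :=
  if wins A M then 1 else 0

/-- `B` weakly dominates `A`. -/
def dominates (B A : ConieStrat) : Prop :=
  (∀ M : MonteStrat, wins A M → wins B M) ∧ ∃ M : MonteStrat, wins B M ∧ ¬ wins A M

/-- Winning probability of pure strategy `A` against mixed strategy `Q` of Monte. -/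
noncomputable def winProb (A : ConieStrat) (Q : MonteStrat → ℝ) : ℝ :=
  ∑ M : MonteStrat, Q M * payoff A M

/-- Marginal probability that the prize is behind door `θ` under `Q`. -/
noncomputable def prizeProb (Q : MonteStrat → ℝ) (θ : Door) : ℝ :=
  ∑ M : MonteStrat, if M.val.1 = θ then Q M else 0

/-- Expected payoff of a mixed profile (P, Q). -/
noncomputable def mixedPay (P : ConieStrat → ℝ) (Q : MonteStrat → ℝ) : ℝ :=
  ∑ A : ConieStrat, ∑ M : MonteStrat, P A * payoff A M * Q M

/-- Conie's uniform always-switching mixed strategy. -/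
noncomputable def Pstar : ConieStrat → ℝ := fun A => if A.2.1 = true ∧ A.2.2 = true then 1/3 else 0

/-! Conie's winning probability splits over the two doors `y` she did not pick: if she switches
when offered `y` she wins exactly when the prize is behind `y`, and if she holds she wins exactly
when the prize is behind her own door and Monte offers `y`. For nonnegative `Q` both quantities are
bounded by a prize marginal, so a strategy whose prize marginals are all `1/3` holds her to `2/3`. -/

lemma smallerAlt_ne_self (x : Door) : smallerAlt x ≠ x := by
  fin_cases x <;> decide

lemma largerAlt_ne_self (x : Door) : largerAlt x ≠ x := by
  fin_cases x <;> decide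

lemma largerAlt_ne_smallerAlt (x : Door) : largerAlt x ≠ smallerAlt x := by
  fin_cases x <;> decide

def smallOffer (θ : Door) : MonteStrat := ⟨(θ, smallerAlt θ), smallerAlt_ne_self θ⟩

def largeOffer (θ : Door) : MonteStrat := ⟨(θ, largerAlt θ), largerAlt_ne_self θ⟩

@[simp] lemma smallOffer_prize (θ : Door) : (smallOffer θ).val.1 = θ := rfl

@[simp] lemma largeOffer_prize (θ : Door) : (largeOffer θ).val.1 = θ := rfl

@[simp] lemma smallOffer_offer (θ : Door) : (smallOffer θ).val.2 = smallerAlt θ := rfl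

@[simp] lemma largeOffer_offer (θ : Door) : (largeOffer θ).val.2 = largerAlt θ := rfl

def offer (p : Door × Bool) : MonteStrat := if p.2 then smallOffer p.1 else largeOffer p.1

lemma offer_bijective : Function.Bijective offer := by decide

lemma sum_monteStrat {β : Type*} [AddCommMonoid β] (f : MonteStrat → β) :
    ∑ M, f M = ∑ θ, (f (smallOffer θ) + f (largeOffer θ)) := by
  rw [← Fintype.sum_bijective offer offer_bijective _ _ fun _ => rfl, Fintype.sum_prod_type]
  simp [offer, add_comm]

lemma prizeProb_eq (Q : MonteStrat → ℝ) (θ : Door) :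
    prizeProb Q θ = Q (smallOffer θ) + Q (largeOffer θ) := by
  rw [prizeProb, sum_monteStrat, Fintype.sum_eq_single θ fun θ' h => by simp [h]]
  simp

lemma sum_door {β : Type*} [AddCommMonoid β] (x : Door) (g : Door → β) :
    ∑ θ, g θ = g x + g (smallerAlt x) + g (largerAlt x) := by
  fin_cases x <;> simp [Fin.sum_univ_three, smallerAlt, largerAlt] <;> abel

@[simp] lemma act_smallerAlt (x : Door) (a b : Bool) : act (x, a, b) (smallerAlt x) = a :=
  if_pos rfl

@[simp] lemma act_largerAlt (x : Door) (a b : Bool) : act (x, a, b) (largerAlt x) = b :=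
  if_neg (largerAlt_ne_smallerAlt x)

lemma winProb_eq (A : ConieStrat) (Q : MonteStrat → ℝ) :
    winProb A Q =
      (if A.2.1 then prizeProb Q (smallerAlt A.1) else Q (smallOffer A.1)) +
      (if A.2.2 then prizeProb Q (largerAlt A.1) else Q (largeOffer A.1)) := by
  obtain ⟨x, a, b⟩ := A
  rw [winProb, sum_monteStrat, sum_door x]
  simp only [payoff, wins, smallOffer_prize, largeOffer_prize, smallOffer_offer, largeOffer_offer,
    (smallerAlt_ne_self x).symm, (largerAlt_ne_self x).symm, act_smallerAlt, act_largerAlt,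
    prizeProb_eq, if_true, if_false]
  cases a <;> cases b <;>
    simp only [Bool.not_true, Bool.not_false, Bool.false_eq_true, if_true, if_false] <;> ring

lemma le_prizeProb_smallOffer {Q : MonteStrat → ℝ} (hQ : ∀ M, 0 ≤ Q M) (θ : Door) :
    Q (smallOffer θ) ≤ prizeProb Q θ := by
  rw [prizeProb_eq]
  linarith [hQ (largeOffer θ)]

lemma le_prizeProb_largeOffer {Q : MonteStrat → ℝ} (hQ : ∀ M, 0 ≤ Q M) (θ : Door) :
    Q (largeOffer θ) ≤ prizeProb Q θ := by
  rw [prizeProb_eq]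
  linarith [hQ (smallOffer θ)]

theorem winProb_le_two_mul {Q : MonteStrat → ℝ} (hQ : ∀ M, 0 ≤ Q M) {c : ℝ}
    (hc : ∀ θ, prizeProb Q θ ≤ c) (A : ConieStrat) : winProb A Q ≤ 2 * c := by
  have hsmall : (if A.2.1 then prizeProb Q (smallerAlt A.1) else Q (smallOffer A.1)) ≤ c := by
    split_ifs
    exacts [hc _, (le_prizeProb_smallOffer hQ _).trans (hc _)]
  have hlarge : (if A.2.2 then prizeProb Q (largerAlt A.1) else Q (largeOffer A.1)) ≤ c := by
    split_ifs
    exacts [hc _, (le_prizeProb_largeOffer hQ _).trans (hc _)]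
  rw [winProb_eq]
  linarith

/-- every Monte strategy with uniform prize marginal and arbitrary
revealing biases λ_θ ∈ [0,1] holds every Conie pure strategy to probability ≤ 2/3. -/
theorem stmt10 (lam : Door → ℝ) (hlam : ∀ θ, lam θ ∈ Set.Icc (0:ℝ) 1)
    (Q : MonteStrat → ℝ)
    (hQ : Q = fun M => if M.val.2 = smallerAlt M.val.1 then lam M.val.1 / 3
                       else (1 - lam M.val.1) / 3)
    (A : ConieStrat) : winProb A Q ≤ 2/3 := by
  have hnonneg : ∀ M, 0 ≤ Q M := by
    intro M
    obtain ⟨h0, h1⟩ := hlam M.val.1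
    simp only [hQ]
    split_ifs <;> linarith
  have hprize : ∀ θ, prizeProb Q θ ≤ 1 / 3 := by
    intro θ
    simp only [prizeProb_eq, hQ, smallOffer_offer, largeOffer_offer, smallOffer_prize,
      largeOffer_prize, largerAlt_ne_smallerAlt, if_true, if_false]
    linarith
  linarith [winProb_le_two_mul hnonneg hprize A]
end

section
/- A mixed strategy of Monte in the Monty Hall game is minimax if and only if its marginal distribution of the prize door θ is uniform on {1,2,3}; equivalently, if the prize-door probabilities are π_1, π_2, π_3 then Conie's best-response value is 1 − min(π_1, π_2, π_3), which is ≥ 2/3 with equality iff all π_θ = 1/3. -/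
open Finset

lemma sum6 (f : MonteStrat → ℝ) : ∑ M : MonteStrat, f M =
    f ⟨(0,1), by decide⟩ + f ⟨(0,2), by decide⟩ + f ⟨(1,0), by decide⟩ +
    f ⟨(1,2), by decide⟩ + f ⟨(2,0), by decide⟩ + f ⟨(2,1), by decide⟩ := by
  rw [show (Finset.univ : Finset MonteStrat) =
    {⟨(0,1), by decide⟩, ⟨(0,2), by decide⟩, ⟨(1,0), by decide⟩,
     ⟨(1,2), by decide⟩, ⟨(2,0), by decide⟩, ⟨(2,1), by decide⟩} from by decide]
  simp [Finset.sum_insert, Finset.mem_insert]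
  ring

/-- Conie's best-response value against Q is 1 − min π, which is
≥ 2/3; Q is minimax iff the prize-door marginal is uniform. -/
theorem stmt11 (Q : MonteStrat → ℝ) (hQ : ∀ M, 0 ≤ Q M)
    (hsum : ∑ M : MonteStrat, Q M = 1) :
    (∀ A : ConieStrat,
      winProb A Q ≤ 1 - min (prizeProb Q 0) (min (prizeProb Q 1) (prizeProb Q 2))) ∧
    (∃ A : ConieStrat,
      winProb A Q = 1 - min (prizeProb Q 0) (min (prizeProb Q 1) (prizeProb Q 2))) ∧
    2/3 ≤ 1 - min (prizeProb Q 0) (min (prizeProb Q 1) (prizeProb Q 2)) ∧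
    ((∀ A : ConieStrat, winProb A Q ≤ 2/3) ↔ ∀ θ : Door, prizeProb Q θ = 1/3) := by
  have hp0 : prizeProb Q 0 = Q ⟨(0,1), by decide⟩ + Q ⟨(0,2), by decide⟩ := by
    rw [prizeProb, sum6]; norm_num [Fin.ext_iff]
  have hp1 : prizeProb Q 1 = Q ⟨(1,0), by decide⟩ + Q ⟨(1,2), by decide⟩ := by
    rw [prizeProb, sum6]; norm_num [Fin.ext_iff]
  have hp2 : prizeProb Q 2 = Q ⟨(2,0), by decide⟩ + Q ⟨(2,1), by decide⟩ := by
    rw [prizeProb, sum6]; norm_num [Fin.ext_iff]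
  rw [sum6] at hsum
  have h01 := hQ ⟨(0,1), by decide⟩
  have h02 := hQ ⟨(0,2), by decide⟩
  have h10 := hQ ⟨(1,0), by decide⟩
  have h12 := hQ ⟨(1,2), by decide⟩
  have h20 := hQ ⟨(2,0), by decide⟩
  have h21 := hQ ⟨(2,1), by decide⟩
  have hm0 : min (prizeProb Q 0) (min (prizeProb Q 1) (prizeProb Q 2)) ≤ prizeProb Q 0 :=
    min_le_left _ _
  have hm1 : min (prizeProb Q 0) (min (prizeProb Q 1) (prizeProb Q 2)) ≤ prizeProb Q 1 :=
    le_trans (min_le_right _ _) (min_le_left _ _)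
  have hm2 : min (prizeProb Q 0) (min (prizeProb Q 1) (prizeProb Q 2)) ≤ prizeProb Q 2 :=
    le_trans (min_le_right _ _) (min_le_right _ _)
  have hub : ∀ A : ConieStrat,
      winProb A Q ≤ 1 - min (prizeProb Q 0) (min (prizeProb Q 1) (prizeProb Q 2)) := by
    rintro ⟨x, a, b⟩
    fin_cases x <;> cases a <;> cases b <;>
      (rw [winProb, sum6]; norm_num [payoff, wins, act, smallerAlt, largerAlt, Fin.ext_iff]; linarith)
  have w0 : winProb (0, true, true) Q = 1 - prizeProb Q 0 := by
    rw [winProb, sum6]; norm_num [payoff, wins, act, smallerAlt, largerAlt, Fin.ext_iff]; linarith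
  have w1 : winProb (1, true, true) Q = 1 - prizeProb Q 1 := by
    rw [winProb, sum6]; norm_num [payoff, wins, act, smallerAlt, largerAlt, Fin.ext_iff]; linarith
  have w2 : winProb (2, true, true) Q = 1 - prizeProb Q 2 := by
    rw [winProb, sum6]; norm_num [payoff, wins, act, smallerAlt, largerAlt, Fin.ext_iff]; linarith
  refine ⟨hub, ?_, by linarith, ?_⟩
  · rcases min_choice (prizeProb Q 0) (min (prizeProb Q 1) (prizeProb Q 2)) with h | h
    · exact ⟨(0, true, true), by rw [w0, h]⟩
    · rcases min_choice (prizeProb Q 1) (prizeProb Q 2) with h' | h'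
      · exact ⟨(1, true, true), by rw [w1, h, h']⟩
      · exact ⟨(2, true, true), by rw [w2, h, h']⟩
  · constructor
    · intro h θ
      have hb0 := h (0, true, true); rw [w0] at hb0
      have hb1 := h (1, true, true); rw [w1] at hb1
      have hb2 := h (2, true, true); rw [w2] at hb2
      fin_cases θ
      · show prizeProb Q 0 = 1/3; linarith
      · show prizeProb Q 1 = 1/3; linarith
      · show prizeProb Q 2 = 1/3; linarith
    · intro h A
      have := hub A
      rw [h 0, h 1, h 2] at this
      norm_num at this
      linarith
end
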